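/- arXiv:1002.5028 — 3 statements merged into one kernel-verified Lean document; each statement's English description precedes it below -/
import Mathlib

section
/- Let w ≠ 0 and u be real numbers with |w| ≥ 1, and let λ > 0. Then ∫_{|ζ| ≤ 1} exp(−λ‖ζ·w + u‖²) dζ = O(|w|/√(1+λ)), with an absolute implied constant. In particular if additionally |w| ≤ K the bound is O_K(1/√(1+λ)). -/
/-- Distance from a real number to the nearest integer. -/
noncomputable def distNearestInt (x : ℝ) : ℝ := |x - round x|

lemma distNearestInt_nonneg (x : ℝ) : 0 ≤ distNearestInt x := abs_nonneg _

lemma distNearestInt_periodic : Function.Periodic distNearestInt 1 := by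
  intro x
  have : round (x + (1:ℝ)) = round x + 1 := by
    have := round_add_intCast x 1
    simpa using this
  simp only [distNearestInt, this]
  push_cast
  ring_nf

lemma abs_le_distNearestInt {x : ℝ} (hx : |x| ≤ 1/2) : |x| ≤ distNearestInt x := by
  unfold distNearestInt
  rcases eq_or_ne (round x) 0 with h | h
  · simp [h]
  · have h1 : (1:ℝ) ≤ |(round x : ℝ)| := by
      rw [← Int.cast_abs]
      exact_mod_cast Int.one_le_abs (by simpa using h)
    have : (1:ℝ)/2 ≤ |x - round x| := by
      have := abs_sub_abs_le_abs_sub (round x : ℝ) x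
      rw [abs_sub_comm] at this
      linarith
    linarith

lemma measurable_distNearestInt : Measurable distNearestInt := by
  have h : Measurable fun x : ℝ => ((round x : ℤ) : ℝ) := by
    have : (fun x : ℝ => (round x : ℤ)) = fun x : ℝ => ⌊x + 1/2⌋ := by
      funext x; exact round_eq x
    rw [show (fun x : ℝ => ((round x : ℤ) : ℝ)) = fun x : ℝ => ((⌊x + 1/2⌋ : ℤ) : ℝ) by
      funext x; rw [round_eq]]
    exact Measurable.comp (measurable_from_top)
      (Int.measurable_floor.comp (measurable_id.add_const _))
  exact (measurable_id.sub h).abs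

lemma g_intervalIntegrable {lam : ℝ} (hlam : 0 ≤ lam) (a b : ℝ) :
    IntervalIntegrable (fun t => Real.exp (-lam * (distNearestInt t) ^ 2)) MeasureTheory.volume a b := by
  rw [intervalIntegrable_iff]
  apply MeasureTheory.Integrable.mono' (g := fun _ => (1:ℝ))
    (MeasureTheory.integrableOn_const (by rw [Set.uIoc]; exact measure_Ioc_lt_top.ne))
  · exact ((measurable_distNearestInt.pow_const 2).const_mul (-lam)).exp.aestronglyMeasurable
  · filter_upwards with t
    rw [Real.norm_eq_abs, abs_of_pos (Real.exp_pos _)]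
    exact Real.exp_le_one_iff.2 (by nlinarith [sq_nonneg (distNearestInt t)])

lemma g_periodic (lam : ℝ) :
    Function.Periodic (fun t => Real.exp (-lam * (distNearestInt t) ^ 2)) 1 := by
  intro x; simp [distNearestInt_periodic x]

/-- One-period Gaussian bound. -/
lemma period_integral_le (lam : ℝ) (hlam : 0 < lam) :
    (∫ t in (-(1/2) : ℝ)..(1/2), Real.exp (-lam * (distNearestInt t) ^ 2))
      ≤ 4 / Real.sqrt (1 + lam) := by
  have hsqrt : 0 < Real.sqrt (1 + lam) := Real.sqrt_pos.2 (by linarith)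
  have h1 : (∫ t in (-(1/2) : ℝ)..(1/2), Real.exp (-lam * (distNearestInt t) ^ 2))
      ≤ ∫ t in (-(1/2) : ℝ)..(1/2), Real.exp (-lam * t ^ 2) := by
    apply intervalIntegral.integral_mono_on (by norm_num) (g_intervalIntegrable hlam.le _ _)
      (integrable_exp_neg_mul_sq hlam).intervalIntegrable
    intro x hx
    apply Real.exp_le_exp.2
    have hx' : |x| ≤ 1/2 := abs_le.2 ⟨by linarith [hx.1], hx.2⟩
    have h2 := abs_le_distNearestInt hx'
    have h3 : x ^ 2 ≤ (distNearestInt x) ^ 2 := by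
      nlinarith [sq_abs x, abs_nonneg x]
    nlinarith
  rcases le_or_gt lam 1 with hl | hl
  · have h2 : (∫ t in (-(1/2) : ℝ)..(1/2), Real.exp (-lam * t ^ 2))
        ≤ ∫ _t in (-(1/2) : ℝ)..(1/2), (1:ℝ) := by
      apply intervalIntegral.integral_mono_on (by norm_num)
        (integrable_exp_neg_mul_sq hlam).intervalIntegrable
        intervalIntegrable_const
      intro x _
      exact Real.exp_le_one_iff.2 (by nlinarith [sq_nonneg x])
    simp only [intervalIntegral.integral_const, smul_eq_mul, mul_one] at h2
    rw [show (1/2 : ℝ) - -(1/2) = 1 by norm_num] at h2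
    have h3 : Real.sqrt (1 + lam) ≤ 2 := by
      rw [show (2:ℝ) = Real.sqrt 4 by rw [show (4:ℝ) = 2^2 by norm_num, Real.sqrt_sq]; norm_num]
      exact Real.sqrt_le_sqrt (by linarith)
    have : (1:ℝ) ≤ 4 / Real.sqrt (1 + lam) := by
      rw [le_div_iff₀ hsqrt]; linarith
    linarith
  · have h2 : (∫ t in (-(1/2) : ℝ)..(1/2), Real.exp (-lam * t ^ 2))
        ≤ ∫ t : ℝ, Real.exp (-lam * t ^ 2) := by
      rw [intervalIntegral.integral_of_le (by norm_num)]
      exact MeasureTheory.setIntegral_le_integral (integrable_exp_neg_mul_sq hlam)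
        (Filter.Eventually.of_forall fun x => (Real.exp_pos _).le)
    rw [integral_gaussian lam] at h2
    have h3 : Real.sqrt (Real.pi / lam) ≤ Real.sqrt (8 / (1 + lam)) := by
      apply Real.sqrt_le_sqrt
      rw [div_le_div_iff₀ hlam (by linarith)]
      nlinarith [Real.pi_le_four]
    have h4 : Real.sqrt (8 / (1 + lam)) = Real.sqrt 8 / Real.sqrt (1 + lam) :=
      Real.sqrt_div (by norm_num) _
    have h5 : Real.sqrt 8 ≤ 4 := by
      rw [show (4:ℝ) = Real.sqrt 16 by rw [show (16:ℝ) = 4^2 by norm_num, Real.sqrt_sq]; norm_num]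
      exact Real.sqrt_le_sqrt (by norm_num)
    have h6 : Real.sqrt 8 / Real.sqrt (1 + lam) ≤ 4 / Real.sqrt (1 + lam) := by
      gcongr
    linarith [h4 ▸ h3]

theorem integral_exp_neg_lambda_distNearestInt_affine_sq :
    ∃ C : ℝ, 0 < C ∧ ∀ (w u lam : ℝ), w ≠ 0 → 1 ≤ |w| → 0 < lam →
      (∫ ζ in Set.Icc (-1 : ℝ) 1, Real.exp (-lam * (distNearestInt (ζ * w + u)) ^ 2))
        ≤ C * |w| / Real.sqrt (1 + lam) := by
  refine ⟨12, by norm_num, fun w u lam hw hw1 hlam => ?_⟩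
  have hsqrt : 0 < Real.sqrt (1 + lam) := Real.sqrt_pos.2 (by linarith)
  have habs : (0:ℝ) < |w| := by linarith
  set g : ℝ → ℝ := fun t => Real.exp (-lam * (distNearestInt t) ^ 2) with hgdef
  have hInt : ∀ a b : ℝ, IntervalIntegrable g MeasureTheory.volume a b :=
    g_intervalIntegrable hlam.le
  have hg0 : ∀ t, 0 ≤ g t := fun t => (Real.exp_pos _).le
  -- Step 1: rewrite as interval integral with w * ζ + u
  have e1 : (∫ ζ in Set.Icc (-1 : ℝ) 1, Real.exp (-lam * (distNearestInt (ζ * w + u)) ^ 2))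
      = ∫ ζ in (-1 : ℝ)..1, g (w * ζ + u) := by
    rw [intervalIntegral.integral_of_le (by norm_num : (-1:ℝ) ≤ 1),
      MeasureTheory.integral_Icc_eq_integral_Ioc]
    simp_rw [hgdef, mul_comm _ w]
  -- Step 2: change of variables
  have e2 : (∫ ζ in (-1 : ℝ)..1, g (w * ζ + u))
      = w⁻¹ • ∫ x in (w * (-1) + u)..(w * 1 + u), g x :=
    intervalIntegral.integral_comp_mul_add g hw u
  -- Step 3: orient the interval
  set A : ℝ := u - |w| with hA
  set B : ℝ := u + |w| with hB
  have e3 : (w⁻¹ • ∫ x in (w * (-1) + u)..(w * 1 + u), g x) = |w|⁻¹ * ∫ x in A..B, g x := by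
    rcases abs_cases w with ⟨hw1', _⟩ | ⟨hw1', _⟩
    · rw [hA, hB, hw1', smul_eq_mul]
      ring_nf
    · have hAe : A = w + u := by rw [hA, hw1']; ring
      have hBe : B = -w + u := by rw [hB, hw1']; ring
      rw [hw1', hAe, hBe, show w * (-1) + u = -w + u by ring,
        show w * 1 + u = w + u by ring,
        intervalIntegral.integral_symm (w + u) (-w + u), smul_eq_mul, inv_neg]
      ring
  set n : ℕ := ⌈2 * |w|⌉₊ with hn
  have hle : (2 : ℝ) * |w| ≤ n := Nat.le_ceil _
  have hAB : A ≤ B := by rw [hA, hB]; linarith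
  have hn2 : B ≤ A + n := by rw [hA, hB]; linarith
  have h4 : (∫ x in A..B, g x) ≤ ∫ x in A..(A + (n:ℝ)), g x :=
    intervalIntegral.integral_mono_interval le_rfl hAB hn2
      (Filter.Eventually.of_forall hg0) (hInt _ _)
  have h5 : (∫ x in A..(A + (n:ℝ)), g x) = (n:ℝ) * ∫ x in (-(1/2):ℝ)..(1/2), g x := by
    have h := (g_periodic lam).intervalIntegral_add_zsmul_eq (n : ℤ) A hInt
    rw [show ((n:ℤ) • (1:ℝ)) = (n:ℝ) by simp] at h
    rw [h, zsmul_eq_mul, (g_periodic lam).intervalIntegral_add_eq A (-(1/2):ℝ),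
      show (-(1/2:ℝ) + 1) = 1/2 by norm_num]
    push_cast
    rfl
  have hP := period_integral_le lam hlam
  have hPnn : 0 ≤ ∫ x in (-(1/2):ℝ)..(1/2), g x :=
    intervalIntegral.integral_nonneg (by norm_num) (fun x _ => hg0 x)
  have hn3 : (n:ℝ) ≤ 3 * |w| := by
    have := Nat.ceil_lt_add_one (by positivity : (0:ℝ) ≤ 2 * |w|)
    linarith
  calc (∫ ζ in Set.Icc (-1 : ℝ) 1, Real.exp (-lam * (distNearestInt (ζ * w + u)) ^ 2))
      = |w|⁻¹ * ∫ x in A..B, g x := by rw [e1, e2, e3]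
    _ ≤ |w|⁻¹ * ((n:ℝ) * ∫ x in (-(1/2):ℝ)..(1/2), g x) := by
        rw [← h5]; exact mul_le_mul_of_nonneg_left h4 (by positivity)
    _ ≤ |w|⁻¹ * ((3 * |w|) * (4 / Real.sqrt (1 + lam))) := by
        refine mul_le_mul_of_nonneg_left ?_ (by positivity)
        exact mul_le_mul hn3 hP hPnn (by positivity)
    _ = 12 / Real.sqrt (1 + lam) := by
        field_simp
        ring
    _ ≤ 12 * |w| / Real.sqrt (1 + lam) := by
        exact (div_le_div_iff_of_pos_right hsqrt).2 (by linarith)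
end

section
/- Let v_1,…,v_n ∈ ℝ^d, let ξ_1,…,ξ_n be i.i.d. Rademacher random variables, and let X = ξ_1 v_1 + … + ξ_n v_n. Then for any closed ball B ⊂ ℝ^d of radius 1, P(X ∈ B) = O_d(∫_{|ζ| ≤ 1} exp(−(1/100) Σ_{j=1}^n ‖ζ·v_j‖²) dζ), where ‖x‖ is the distance from x to the nearest integer. -/
open scoped RealInnerProductSpace
open MeasureTheory
open scoped ENNReal

noncomputable abbrev Ed (d : ℕ) := EuclideanSpace ℝ (Fin d)

noncomputable def eFn {d : ℕ} (u z : Ed d) : ℂ :=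
  Complex.exp ((Real.pi * ⟪u, z⟫ : ℝ) * Complex.I)

noncomputable def Xsum {d n : ℕ} (v : Fin n → Ed d) (ω : Fin n → Bool) : Ed d :=
  ∑ j, (if ω j then (1 : ℝ) else -1) • v j

lemma echar {d n : ℕ} (v : Fin n → Ed d) (u : Ed d) :
    ∑ ω : Fin n → Bool, ((2 : ℂ) ^ n)⁻¹ * eFn u (Xsum v ω)
      = ∏ j, (Real.cos (Real.pi * ⟪u, v j⟫) : ℂ) := by
  classical
  have hterm : ∀ ω : Fin n → Bool, ((2 : ℂ) ^ n)⁻¹ * eFn u (Xsum v ω)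
      = ∏ j, ((2 : ℂ))⁻¹ *
          Complex.exp (((if ω j then (1:ℝ) else -1) * (Real.pi * ⟪u, v j⟫) : ℝ) * Complex.I) := by
    intro ω
    have hin : (Real.pi * ⟪u, Xsum v ω⟫ : ℝ)
        = ∑ j, (if ω j then (1:ℝ) else -1) * (Real.pi * ⟪u, v j⟫) := by
      rw [Xsum, inner_sum, Finset.mul_sum]
      refine Finset.sum_congr rfl fun j _ => ?_
      rw [real_inner_smul_right]; ring
    rw [eFn, hin, Complex.ofReal_sum, Finset.sum_mul, Complex.exp_sum,
      Finset.prod_mul_distrib, Finset.prod_const]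
    congr 1
    simp [inv_pow]
  rw [Finset.sum_congr rfl fun ω _ => hterm ω]
  rw [← Fintype.piFinset_univ,
    ← Finset.prod_univ_sum (fun _ : Fin n => (Finset.univ : Finset Bool))
      (fun j b => ((2:ℂ))⁻¹ *
        Complex.exp ((((if b then (1:ℝ) else -1) * (Real.pi * ⟪u, v j⟫)) : ℝ) * Complex.I))]
  refine Finset.prod_congr rfl fun j _ => ?_
  rw [Fintype.sum_bool]
  simp only [Bool.false_eq_true, if_false, if_true, one_mul]
  have hneg : ((-1 : ℝ) * (Real.pi * ⟪u, v j⟫) : ℝ) = -(Real.pi * ⟪u, v j⟫) := by ring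
  rw [hneg, Complex.ofReal_neg, Complex.ofReal_cos]
  rw [Complex.exp_mul_I, Complex.exp_mul_I]
  simp [Complex.cos_neg, Complex.sin_neg]
  ring

lemma econj (r : ℝ) :
    (starRingEnd ℂ) (Complex.exp ((r : ℂ) * Complex.I)) =
      Complex.exp ((-r : ℝ) * Complex.I) := by
  rw [← Complex.exp_conj]
  congr 1
  rw [map_mul, Complex.conj_ofReal, Complex.conj_I]
  push_cast; ring

lemma epoint {d n : ℕ} (v : Fin n → Ed d) (x : Ed d) (ζ ζ' : Ed d) :
    ∑ ω : Fin n → Bool, ((2 : ℂ) ^ n)⁻¹ *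
        (eFn ζ (Xsum v ω - x) * (starRingEnd ℂ) (eFn ζ' (Xsum v ω - x)))
      = Complex.exp (((-(Real.pi * ⟪ζ - ζ', x⟫) : ℝ)) * Complex.I) *
          ∏ j, (Real.cos (Real.pi * ⟪ζ - ζ', v j⟫) : ℂ) := by
  classical
  have h1 : ∀ ω : Fin n → Bool,
      eFn ζ (Xsum v ω - x) * (starRingEnd ℂ) (eFn ζ' (Xsum v ω - x))
        = Complex.exp (((-(Real.pi * ⟪ζ - ζ', x⟫) : ℝ)) * Complex.I) * eFn (ζ - ζ') (Xsum v ω) := by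
    intro ω
    rw [eFn, eFn, eFn, econj, ← Complex.exp_add, ← Complex.exp_add]
    congr 1
    have hr : Real.pi * ⟪ζ, Xsum v ω - x⟫ + -(Real.pi * ⟪ζ', Xsum v ω - x⟫)
        = -(Real.pi * ⟪ζ - ζ', x⟫) + Real.pi * ⟪ζ - ζ', Xsum v ω⟫ := by
      rw [inner_sub_right, inner_sub_right, inner_sub_left, inner_sub_left]; ring
    have := congrArg (fun r : ℝ => (r : ℂ) * Complex.I) hr
    push_cast at this ⊢
    linear_combination this
  rw [Finset.sum_congr rfl fun ω _ => by rw [h1 ω]]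
  rw [← echar v (ζ - ζ'), Finset.mul_sum]
  exact Finset.sum_congr rfl fun ω _ => by ring

noncomputable def gFn {d n : ℕ} (v : Fin n → Ed d) (u : Ed d) : ℝ :=
  Real.exp (-(1 / 100) * ∑ j, (distNearestInt ⟪u, v j⟫) ^ 2)

section
open Real
set_option maxHeartbeats 1000000 in
lemma cos_pi_le' (t : ℝ) : |Real.cos (Real.pi * t)| ≤ Real.exp (-(1/100) * (distNearestInt t)^2) := by
  set m : ℤ := round t with hm
  set θ : ℝ := t - m with hθ
  have hd : distNearestInt t = |θ| := rfl
  have habs : |θ| ≤ 1/2 := abs_sub_round t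
  have ht : t = m + θ := by ring
  clear_value θ
  clear_value m
  have h1 : Real.cos (π * t) = Real.cos (m * π - (-(π * θ))) := by
    rw [ht]; ring_nf
  have h2 : |Real.cos (π * t)| = |Real.cos (π * θ)| := by
    rw [h1, Real.cos_int_mul_pi_sub, abs_mul, Real.cos_neg]
    have : |((-1 : ℝ)) ^ m| = 1 := by
      rcases Int.even_or_odd m with he | ho
      · rw [he.neg_one_zpow]; simp
      · rw [Odd.neg_one_zpow ho]; simp
    rw [this, one_mul]
  rw [h2, hd]
  have hπpos := Real.pi_pos
  have hπ3 : π > 3 := Real.pi_gt_three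
  have hπ32 : π < 3.15 := by linarith [Real.pi_lt_d2]
  have hπθ : |π * θ| ≤ π / 2 := by
    rw [abs_mul, abs_of_pos hπpos]
    nlinarith
  have hcnn : 0 ≤ Real.cos (π * θ) := by
    apply Real.cos_nonneg_of_mem_Icc
    constructor <;> [linarith [abs_le.1 hπθ |>.1]; linarith [abs_le.1 hπθ |>.2]]
  rw [abs_of_nonneg hcnn]
  have key : Real.cos (π * θ) ≤ 1 - (1/100) * |θ|^2 := by
    rcases eq_or_ne θ 0 with h0 | h0
    · simp [h0]
    · have habs0 : 0 < |θ| := abs_pos.2 h0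
      have hx0 : 0 < π * |θ| / 2 := by positivity
      have hx1 : π * |θ| / 2 ≤ 1 := by nlinarith
      have hcos2 : Real.cos (π * θ) = 1 - 2 * Real.sin (π * θ / 2)^2 := by
        have he : π * θ = 2 * (π * θ / 2) := by ring
        conv_lhs => rw [he]
        rw [Real.cos_two_mul]
        nlinarith [Real.sin_sq_add_cos_sq (π * θ / 2)]
      have hsineq : Real.sin (π * θ / 2)^2 = Real.sin (π * |θ| / 2)^2 := by
        rcases abs_cases θ with ⟨h,_⟩|⟨h,_⟩
        · rw [h]
        · have : π * |θ| / 2 = -(π * θ / 2) := by rw [h]; ring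
          rw [this, Real.sin_neg, neg_sq]
      rw [hcos2, hsineq]
      set x := π * |θ| / 2 with hxdef
      have hsin := Real.sin_gt_sub_cube hx0
      have hx2 : x^2 ≤ 1 := by nlinarith
      have hx3 : x^3 ≤ x := by nlinarith
      have hsin' : x * (3/4) ≤ Real.sin x := by linarith
      have hsq : (x * (3/4))^2 ≤ Real.sin x ^ 2 := by
        have h34 : 0 ≤ x * (3/4) := by positivity
        nlinarith
      have hπsq : π^2 ≥ 9 := by nlinarith
      have hxe : (x * (3/4))^2 = (9/64) * (π^2 * |θ|^2) := by
        rw [hxdef]; ring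
      have h9 : 9 * |θ|^2 ≤ π^2 * |θ|^2 :=
        mul_le_mul_of_nonneg_right hπsq (sq_nonneg |θ|)
      have hlow : (x * (3/4))^2 ≥ (1/200) * |θ|^2 := by
        rw [hxe]; nlinarith [sq_nonneg |θ|]
      linarith
  have hexp := Real.add_one_le_exp (-(1/100) * |θ|^2)
  linarith

end

lemma epoint_norm {d n : ℕ} (v : Fin n → Ed d) (x : Ed d) (u : Ed d) :
    ‖Complex.exp (((-(Real.pi * ⟪u, x⟫) : ℝ)) * Complex.I) *
        ∏ j, (Real.cos (Real.pi * ⟪u, v j⟫) : ℂ)‖ ≤ gFn v u := by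
  rw [norm_mul, Complex.norm_exp_ofReal_mul_I, one_mul, norm_prod]
  have h1 : ∀ j : Fin n, ‖(Real.cos (Real.pi * ⟪u, v j⟫) : ℂ)‖
      ≤ Real.exp (-(1/100) * (distNearestInt ⟪u, v j⟫)^2) := by
    intro j
    rw [Complex.norm_real, Real.norm_eq_abs]
    exact cos_pi_le' _
  calc ∏ j, ‖(Real.cos (Real.pi * ⟪u, v j⟫) : ℂ)‖
      ≤ ∏ j, Real.exp (-(1/100) * (distNearestInt ⟪u, v j⟫)^2) :=
        Finset.prod_le_prod (fun j _ => norm_nonneg _) (fun j _ => h1 j)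
    _ = gFn v u := by
        rw [← Real.exp_sum, gFn, Finset.mul_sum]

lemma eFn_cont {d : ℕ} (z : Ed d) : Continuous fun u : Ed d => eFn u z := by
  unfold eFn
  exact Complex.continuous_exp.comp
    ((Complex.continuous_ofReal.comp (continuous_const.mul (continuous_id.inner continuous_const))).mul
      continuous_const)

lemma gFn_meas {d n : ℕ} (v : Fin n → Ed d) : Measurable (gFn v) := by
  have hround : Measurable fun t : ℝ => ((round t : ℤ) : ℝ) := by
    have h1 : Measurable fun t : ℝ => (⌊t + 1/2⌋ : ℤ) := (measurable_id.add_const _).floor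
    have h2 : Measurable fun k : ℤ => (k : ℝ) := measurable_from_top
    have : (fun t : ℝ => ((round t : ℤ) : ℝ)) = fun t => ((⌊t + 1/2⌋ : ℤ) : ℝ) := by
      funext t; rw [round_eq]
    rw [this]; exact h2.comp h1
  have hdni : Measurable distNearestInt := by
    have : distNearestInt = fun t => |t - ((round t : ℤ) : ℝ)| := rfl
    rw [this]; exact (measurable_id.sub hround).abs
  apply Real.measurable_exp.comp
  apply Measurable.const_mul
  apply Finset.measurable_sum
  intro j _
  exact (hdni.comp (continuous_id.inner continuous_const).measurable).pow_const 2

lemma gFn_nonneg {d n : ℕ} (v : Fin n → Ed d) (u : Ed d) : 0 ≤ gFn v u := (Real.exp_pos _).le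

lemma gFn_le_one {d n : ℕ} (v : Fin n → Ed d) (u : Ed d) : gFn v u ≤ 1 := by
  rw [gFn, Real.exp_le_one_iff]
  have : (0:ℝ) ≤ ∑ j, (distNearestInt ⟪u, v j⟫)^2 :=
    Finset.sum_nonneg fun j _ => sq_nonneg _
  linarith

lemma gFn_integrableOn {d n : ℕ} (v : Fin n → Ed d) {s : Set (Ed d)}
    (hs : MeasurableSet s) (hv : volume s < ⊤) : IntegrableOn (gFn v) s := by
  refine Integrable.mono' (g := fun _ => (1:ℝ)) (integrableOn_const hv.ne)
    (gFn_meas v).aestronglyMeasurable (ae_of_all _ fun u => ?_)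
  rw [Real.norm_eq_abs, abs_of_nonneg (gFn_nonneg v u)]
  exact gFn_le_one v u

lemma Fc_lower {d : ℕ} {V : ℝ} (hV : V = (volume (Metric.closedBall (0 : Ed d) (1/3))).toReal)
    (z : Ed d) (hz : ‖z‖ ≤ 1) :
    (V/2)^2 ≤ Complex.normSq (∫ ζ in Metric.closedBall (0 : Ed d) (1/3), eFn ζ z) := by
  set Q : Set (Ed d) := Metric.closedBall 0 (1/3) with hQ
  have hQm : MeasurableSet Q := measurableSet_closedBall
  have hQc : IsCompact Q := isCompact_closedBall _ _
  have hint : IntegrableOn (fun ζ => eFn ζ z) Q := (eFn_cont z).continuousOn.integrableOn_compact hQc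
  have hre : (∫ ζ in Q, eFn ζ z).re = ∫ ζ in Q, (eFn ζ z).re := (integral_re hint).symm
  have hcos : ∀ ζ : Ed d, (eFn ζ z).re = Real.cos (Real.pi * ⟪ζ, z⟫) := by
    intro ζ; rw [eFn, Complex.exp_ofReal_mul_I_re]
  have hlow : V/2 ≤ (∫ ζ in Q, eFn ζ z).re := by
    rw [hre]
    have hbd : ∀ ζ ∈ Q, (1:ℝ)/2 ≤ (eFn ζ z).re := by
      intro ζ hζ
      rw [hcos]
      have hζn : ‖ζ‖ ≤ 1/3 := by rwa [hQ, Metric.mem_closedBall, dist_zero_right] at hζ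
      have h1 : |⟪ζ, z⟫| ≤ 1/3 := by
        calc |⟪ζ, z⟫| ≤ ‖ζ‖ * ‖z‖ := abs_real_inner_le_norm ζ z
          _ ≤ 1/3 := by nlinarith [norm_nonneg ζ, norm_nonneg z]
      have h2 : |Real.pi * ⟪ζ, z⟫| ≤ Real.pi/3 := by
        rw [abs_mul, abs_of_pos Real.pi_pos]
        nlinarith [Real.pi_pos]
      have h3 : Real.cos (Real.pi/3) ≤ Real.cos |Real.pi * ⟪ζ, z⟫| := by
        apply Real.cos_le_cos_of_nonneg_of_le_pi (abs_nonneg _) ?_ h2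
        linarith [Real.pi_pos]
      rw [Real.cos_abs, Real.cos_pi_div_three] at h3
      linarith
    calc V/2 = ∫ _ζ in Q, (1:ℝ)/2 := by
          rw [setIntegral_const, smul_eq_mul, hV, Measure.real]; ring
      _ ≤ ∫ ζ in Q, (eFn ζ z).re :=
          setIntegral_mono_on (integrableOn_const hQc.measure_lt_top.ne) hint.re hQm hbd
  have hVnn : 0 ≤ V/2 := by
    rw [hV]; positivity
  calc (V/2)^2 ≤ (∫ ζ in Q, eFn ζ z).re ^ 2 := by
        apply pow_le_pow_left₀ hVnn hlow
    _ ≤ Complex.normSq (∫ ζ in Q, eFn ζ z) := by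
        rw [Complex.normSq_apply]; nlinarith [sq_nonneg (∫ ζ in Q, eFn ζ z).im]

lemma main_estimate {d n : ℕ} (v : Fin n → Ed d) (x : Ed d) :
    ∑ ω : Fin n → Bool, ((2:ℝ)^n)⁻¹ *
        Complex.normSq (∫ ζ in Metric.closedBall (0 : Ed d) (1/3), eFn ζ (Xsum v ω - x))
      ≤ (volume (Metric.closedBall (0 : Ed d) (1/3))).toReal *
          ∫ u in Metric.closedBall (0 : Ed d) 1, gFn v u := by
  classical
  set Q : Set (Ed d) := Metric.closedBall 0 (1/3) with hQ
  set B : Set (Ed d) := Metric.closedBall 0 1 with hB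
  have hQm : MeasurableSet Q := measurableSet_closedBall
  have hQc : IsCompact Q := isCompact_closedBall _ _
  have hBm : MeasurableSet B := measurableSet_closedBall
  have hBc : IsCompact B := isCompact_closedBall _ _
  set I0 : ℝ := ∫ u in B, gFn v u with hI0
  set pC : ℂ := ((2:ℂ)^n)⁻¹ with hpCdef
  have hpC : pC = ((((2:ℝ)^n)⁻¹ : ℝ) : ℂ) := by rw [hpCdef]; push_cast; ring
  set Fc : (Fin n → Bool) → ℂ := fun ω => ∫ ζ in Q, eFn ζ (Xsum v ω - x) with hFc
  have hecont : ∀ (ω : Fin n → Bool), Continuous fun ζ => eFn ζ (Xsum v ω - x) :=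
    fun ω => eFn_cont _
  have heint : ∀ (ω : Fin n → Bool), IntegrableOn (fun ζ => eFn ζ (Xsum v ω - x)) Q :=
    fun ω => (hecont ω).continuousOn.integrableOn_compact hQc
  -- Step A
  have hA : ∑ ω : Fin n → Bool, ((2:ℝ)^n)⁻¹ * Complex.normSq (Fc ω)
      = (∑ ω : Fin n → Bool, pC * (Fc ω * (starRingEnd ℂ) (Fc ω))).re := by
    rw [Complex.re_sum]
    refine Finset.sum_congr rfl fun ω _ => ?_
    rw [hpC, Complex.mul_conj, ← Complex.ofReal_mul, Complex.ofReal_re]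
  -- Step B
  set hh : Ed d → ℂ := fun ζ => ∑ ω : Fin n → Bool, pC * (eFn ζ (Xsum v ω - x) * (starRingEnd ℂ) (Fc ω))
    with hhh
  have hhcont : Continuous hh := by
    apply continuous_finset_sum
    intro ω _
    exact continuous_const.mul ((hecont ω).mul continuous_const)
  have hB1 : ∑ ω : Fin n → Bool, pC * (Fc ω * (starRingEnd ℂ) (Fc ω)) = ∫ ζ in Q, hh ζ := by
    rw [hhh, integral_finset_sum]
    · refine Finset.sum_congr rfl fun ω _ => ?_
      calc pC * (Fc ω * (starRingEnd ℂ) (Fc ω))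
          = pC * ((∫ ζ in Q, eFn ζ (Xsum v ω - x)) * (starRingEnd ℂ) (Fc ω)) := by rw [hFc]
        _ = pC * (∫ ζ in Q, eFn ζ (Xsum v ω - x) * (starRingEnd ℂ) (Fc ω)) := by
            rw [integral_mul_const]
        _ = ∫ ζ in Q, pC * (eFn ζ (Xsum v ω - x) * (starRingEnd ℂ) (Fc ω)) := by
            rw [integral_const_mul]
    · intro ω _
      exact ((continuous_const.mul ((hecont ω).mul continuous_const)).continuousOn.integrableOn_compact hQc)
  -- Step C : pointwise bound in ζ
  have hgQint : ∀ ζ : Ed d, IntegrableOn (fun ζ' => gFn v (ζ - ζ')) Q := by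
    intro ζ
    refine Integrable.mono' (g := fun _ => (1:ℝ)) (integrableOn_const hQc.measure_lt_top.ne)
      ((gFn_meas v).comp (measurable_const.sub measurable_id)).aestronglyMeasurable
      (ae_of_all _ fun u => ?_)
    rw [Real.norm_eq_abs, abs_of_nonneg (gFn_nonneg v _)]
    exact gFn_le_one v _
  have hC : ∀ ζ ∈ Q, (hh ζ).re ≤ I0 := by
    intro ζ hζ
    have hζn : ‖ζ‖ ≤ 1/3 := by rwa [hQ, Metric.mem_closedBall, dist_zero_right] at hζ
    set Sf : Ed d → ℂ := fun ζ' =>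
      ∑ ω : Fin n → Bool, pC * (eFn ζ (Xsum v ω - x) * (starRingEnd ℂ) (eFn ζ' (Xsum v ω - x)))
      with hSf
    have hSfcont : Continuous Sf := by
      apply continuous_finset_sum
      intro ω _
      refine continuous_const.mul (continuous_const.mul ?_)
      have : Continuous fun ζ' : Ed d => eFn ζ' (Xsum v ω - x) := hecont ω
      exact continuous_star.comp this
    -- C1
    have hC1 : hh ζ = ∫ ζ' in Q, Sf ζ' := by
      rw [hhh, hSf, integral_finset_sum]
      · refine Finset.sum_congr rfl fun ω _ => ?_
        have hconjFc : (starRingEnd ℂ) (Fc ω) = ∫ ζ' in Q, (starRingEnd ℂ) (eFn ζ' (Xsum v ω - x)) :=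
          integral_conj.symm
        calc pC * (eFn ζ (Xsum v ω - x) * (starRingEnd ℂ) (Fc ω))
            = (pC * eFn ζ (Xsum v ω - x)) * ∫ ζ' in Q, (starRingEnd ℂ) (eFn ζ' (Xsum v ω - x)) := by
              rw [hconjFc]; ring
          _ = ∫ ζ' in Q, (pC * eFn ζ (Xsum v ω - x)) * (starRingEnd ℂ) (eFn ζ' (Xsum v ω - x)) :=
              (integral_const_mul _ _).symm
          _ = ∫ ζ' in Q, pC * (eFn ζ (Xsum v ω - x) * (starRingEnd ℂ) (eFn ζ' (Xsum v ω - x))) := by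
              simp only [mul_assoc]
      · intro ω _
        refine (Continuous.continuousOn ?_).integrableOn_compact hQc
        exact continuous_const.mul (continuous_const.mul (continuous_star.comp (hecont ω)))
    -- C2 + C3
    have hC3 : ∫ ζ' in Q, ‖Sf ζ'‖ ≤ ∫ ζ' in Q, gFn v (ζ - ζ') := by
      refine setIntegral_mono_on (hSfcont.norm.continuousOn.integrableOn_compact hQc)
        (hgQint ζ) hQm fun ζ' _ => ?_
      rw [hSf]
      calc ‖∑ ω : Fin n → Bool, pC * (eFn ζ (Xsum v ω - x) * (starRingEnd ℂ) (eFn ζ' (Xsum v ω - x)))‖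
          = ‖Complex.exp (((-(Real.pi * ⟪ζ - ζ', x⟫) : ℝ)) * Complex.I) *
              ∏ j, (Real.cos (Real.pi * ⟪ζ - ζ', v j⟫) : ℂ)‖ := by rw [hpCdef, epoint v x ζ ζ']
        _ ≤ gFn v (ζ - ζ') := epoint_norm v x (ζ - ζ')
    -- C4 : translation
    have hC4 : ∫ ζ' in Q, gFn v (ζ - ζ') ≤ I0 := by
      have htrans : ∫ ζ' in Q, gFn v (ζ - ζ')
          = ∫ u, (Set.indicator Q fun s => gFn v (ζ - s)) (ζ - u) := by
        rw [← integral_indicator hQm]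
        exact (integral_sub_left_eq_self (Set.indicator Q fun s => gFn v (ζ - s)) volume ζ).symm
      have hset : MeasurableSet {u : Ed d | ζ - u ∈ Q} :=
        (measurable_const.sub measurable_id) hQm
      have hptwise : ∀ u : Ed d, (Set.indicator Q fun s => gFn v (ζ - s)) (ζ - u)
          = Set.indicator {u : Ed d | ζ - u ∈ Q} (gFn v) u := by
        intro u
        by_cases h : ζ - u ∈ Q
        · rw [Set.indicator_of_mem h, Set.indicator_of_mem (by exact h)]
          congr 1
          abel
        · rw [Set.indicator_of_notMem h, Set.indicator_of_notMem (by exact h)]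
      have hsub : {u : Ed d | ζ - u ∈ Q} ⊆ B := by
        intro u hu
        have h1 : ‖ζ - u‖ ≤ 1/3 := by
          have := hu
          rw [Set.mem_setOf_eq, hQ, Metric.mem_closedBall, dist_zero_right] at this
          exact this
        rw [hB, Metric.mem_closedBall, dist_zero_right]
        calc ‖u‖ = ‖ζ - (ζ - u)‖ := by congr 1; abel
          _ ≤ ‖ζ‖ + ‖ζ - u‖ := norm_sub_le _ _
          _ ≤ 1 := by linarith
      have hint1 : Integrable (Set.indicator {u : Ed d | ζ - u ∈ Q} (gFn v)) :=
        (integrable_indicator_iff hset).2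
          ((gFn_integrableOn v hBm hBc.measure_lt_top).mono_set hsub)
      have hint2 : Integrable (Set.indicator B (gFn v)) :=
        (integrable_indicator_iff hBm).2 (gFn_integrableOn v hBm hBc.measure_lt_top)
      calc ∫ ζ' in Q, gFn v (ζ - ζ')
          = ∫ u, Set.indicator {u : Ed d | ζ - u ∈ Q} (gFn v) u := by
            rw [htrans]; exact integral_congr_ae (ae_of_all _ hptwise)
        _ ≤ ∫ u, Set.indicator B (gFn v) u := by
            refine integral_mono hint1 hint2 ?_
            exact Set.indicator_le_indicator_of_subset hsub (fun u => gFn_nonneg v u)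
        _ = I0 := by rw [integral_indicator hBm]
    calc (hh ζ).re ≤ ‖hh ζ‖ := Complex.re_le_norm _
      _ = ‖∫ ζ' in Q, Sf ζ'‖ := by rw [hC1]
      _ ≤ ∫ ζ' in Q, ‖Sf ζ'‖ := norm_integral_le_integral_norm _
      _ ≤ ∫ ζ' in Q, gFn v (ζ - ζ') := hC3
      _ ≤ I0 := hC4
  -- Step D
  have hhint : IntegrableOn hh Q := hhcont.continuousOn.integrableOn_compact hQc
  have hD : (∫ ζ in Q, hh ζ).re ≤ (volume Q).toReal * I0 := by
    have h1 : (∫ ζ in Q, hh ζ).re = ∫ ζ in Q, (hh ζ).re := (integral_re hhint).symm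
    rw [h1]
    calc ∫ ζ in Q, (hh ζ).re ≤ ∫ _ζ in Q, I0 :=
          setIntegral_mono_on hhint.re (integrableOn_const hQc.measure_lt_top.ne) hQm hC
      _ = (volume Q).toReal * I0 := by rw [setIntegral_const, smul_eq_mul, Measure.real]
  calc ∑ ω : Fin n → Bool, ((2:ℝ)^n)⁻¹ * Complex.normSq (Fc ω)
      = (∑ ω : Fin n → Bool, pC * (Fc ω * (starRingEnd ℂ) (Fc ω))).re := hA
    _ = (∫ ζ in Q, hh ζ).re := by rw [hB1]
    _ ≤ (volume Q).toReal * I0 := hD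

theorem esseen_type_bound (d : ℕ) :
    ∃ C : ℝ, 0 < C ∧
      ∀ (n : ℕ) (v : Fin n → EuclideanSpace ℝ (Fin d)) (x : EuclideanSpace ℝ (Fin d)),
      (((PMF.uniformOfFintype (Fin n → Bool)).toMeasure
          {ω | (∑ j, (if ω j then (1 : ℝ) else -1) • v j) ∈ Metric.closedBall x 1}).toReal)
        ≤ C * ∫ ζ in Metric.closedBall (0 : EuclideanSpace ℝ (Fin d)) 1,
            Real.exp (-(1 / 100) * ∑ j, (distNearestInt ⟪ζ, v j⟫) ^ 2) := by
  classical
  have hQc : IsCompact (Metric.closedBall (0 : EuclideanSpace ℝ (Fin d)) (1/3)) :=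
    isCompact_closedBall _ _
  set V : ℝ := (volume (Metric.closedBall (0 : EuclideanSpace ℝ (Fin d)) (1/3))).toReal with hV
  have hVpos : 0 < V :=
    ENNReal.toReal_pos (Metric.measure_closedBall_pos volume 0 (by norm_num)).ne'
      hQc.measure_lt_top.ne
  refine ⟨4 / V, by positivity, ?_⟩
  intro n v x
  set s : Set (Fin n → Bool) :=
    {ω | (∑ j, (if ω j then (1 : ℝ) else -1) • v j) ∈ Metric.closedBall x 1} with hs
  set I0 : ℝ := ∫ ζ in Metric.closedBall (0 : EuclideanSpace ℝ (Fin d)) 1,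
      Real.exp (-(1 / 100) * ∑ j, (distNearestInt ⟪ζ, v j⟫) ^ 2) with hI0
  have hI0g : I0 = ∫ u in Metric.closedBall (0 : EuclideanSpace ℝ (Fin d)) 1, gFn v u := rfl
  have hcard : ((Fintype.card (Fin n → Bool) : ℝ≥0∞)) = (2:ℝ≥0∞)^n := by
    rw [Fintype.card_fun]
    push_cast [Fintype.card_bool, Fintype.card_fin]
    ring
  have hP : ((PMF.uniformOfFintype (Fin n → Bool)).toMeasure s).toReal
      = ∑ ω : Fin n → Bool, (s.indicator ⇑(PMF.uniformOfFintype (Fin n → Bool)) ω).toReal := by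
    rw [PMF.toMeasure_apply_fintype]
    refine ENNReal.toReal_sum fun ω _ => ?_
    exact ne_top_of_le_ne_top (PMF.apply_ne_top _ _) (Set.indicator_le_self _ _ ω)
  have hterm : ∀ ω : Fin n → Bool,
      (s.indicator ⇑(PMF.uniformOfFintype (Fin n → Bool)) ω).toReal
        ≤ ((V/2)^2)⁻¹ * (((2:ℝ)^n)⁻¹ *
            Complex.normSq (∫ ζ in Metric.closedBall (0 : EuclideanSpace ℝ (Fin d)) (1/3),
              eFn ζ (Xsum v ω - x))) := by
    intro ω
    by_cases h : ω ∈ s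
    · rw [Set.indicator_of_mem h, PMF.uniformOfFintype_apply]
      have h1 : ((Fintype.card (Fin n → Bool) : ℝ≥0∞)⁻¹).toReal = ((2:ℝ)^n)⁻¹ := by
        rw [ENNReal.toReal_inv, hcard]
        norm_num
      rw [h1]
      have hz : ‖Xsum v ω - x‖ ≤ 1 := by
        have h2 := h
        rw [hs, Set.mem_setOf_eq, Metric.mem_closedBall, dist_eq_norm] at h2
        exact h2
      have hlow := Fc_lower hV (Xsum v ω - x) hz
      have hc : (0:ℝ) < (V/2)^2 := by positivity
      have h3 : ((2:ℝ)^n)⁻¹ * (V/2)^2 ≤ ((2:ℝ)^n)⁻¹ *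
          Complex.normSq (∫ ζ in Metric.closedBall (0 : EuclideanSpace ℝ (Fin d)) (1/3),
            eFn ζ (Xsum v ω - x)) :=
        mul_le_mul_of_nonneg_left hlow (by positivity)
      calc ((2:ℝ)^n)⁻¹ = ((V/2)^2)⁻¹ * (((2:ℝ)^n)⁻¹ * (V/2)^2) := by
            field_simp
        _ ≤ _ := mul_le_mul_of_nonneg_left h3 (by positivity)
    · rw [Set.indicator_of_notMem h]
      simp only [ENNReal.toReal_zero]
      have := Complex.normSq_nonneg (∫ ζ in Metric.closedBall (0 : EuclideanSpace ℝ (Fin d)) (1/3),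
        eFn ζ (Xsum v ω - x))
      positivity
  calc ((PMF.uniformOfFintype (Fin n → Bool)).toMeasure s).toReal
      = ∑ ω : Fin n → Bool, (s.indicator ⇑(PMF.uniformOfFintype (Fin n → Bool)) ω).toReal := hP
    _ ≤ ∑ ω : Fin n → Bool, ((V/2)^2)⁻¹ * (((2:ℝ)^n)⁻¹ *
          Complex.normSq (∫ ζ in Metric.closedBall (0 : EuclideanSpace ℝ (Fin d)) (1/3),
            eFn ζ (Xsum v ω - x))) := Finset.sum_le_sum fun ω _ => hterm ω
    _ = ((V/2)^2)⁻¹ * ∑ ω : Fin n → Bool, (((2:ℝ)^n)⁻¹ *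
          Complex.normSq (∫ ζ in Metric.closedBall (0 : EuclideanSpace ℝ (Fin d)) (1/3),
            eFn ζ (Xsum v ω - x))) := by rw [Finset.mul_sum]
    _ ≤ ((V/2)^2)⁻¹ * (V * I0) := by
        refine mul_le_mul_of_nonneg_left ?_ (by positivity)
        have := main_estimate v x
        rw [← hV, ← hI0g] at this
        exact this
    _ = 4 / V * I0 := by
        field_simp
        ring
end

section
/- For fixed s ≥ 1, (1/2)·2^{−(n−k)}S(n−k,s−1) + (1/2)·2^{−(n−k)}S(n−k,s) < 2^{−n}S(n,s) for all sufficiently large n, uniformly over 0 ≤ k ≤ n^{2/3}. -/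
/-- `S n m` is the sum of the `m` largest binomial coefficients among
`n.choose 0, …, n.choose n`. -/
def S (n m : ℕ) : ℕ :=
  ((Finset.range (n + 1)).powersetCard (min m (n + 1))).sup fun A => ∑ i ∈ A, n.choose i

lemma S_le (n t : ℕ) : S n t ≤ t * n.choose (n / 2) := by
  refine Finset.sup_le fun A hA => ?_
  rw [Finset.mem_powersetCard] at hA
  calc ∑ i ∈ A, n.choose i ≤ A.card • n.choose (n / 2) :=
        Finset.sum_le_card_nsmul _ _ _ fun i _ => Nat.choose_le_middle i n
    _ = A.card * n.choose (n / 2) := by rw [smul_eq_mul]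
    _ ≤ t * n.choose (n / 2) := Nat.mul_le_mul_right _ (by rw [hA.2]; exact min_le_left _ _)

lemma choose_anti (n : ℕ) {a b : ℕ} (ha : n / 2 ≤ a) (hab : a ≤ b) :
    n.choose b ≤ n.choose a := by
  induction b, hab using Nat.le_induction with
  | base => exact le_rfl
  | succ b hb ih =>
    refine le_trans ?_ ih
    have h := Nat.choose_succ_right_eq n b
    have h2 : n - b ≤ b + 1 := by omega
    have h3 : n.choose (b + 1) * (b + 1) ≤ n.choose b * (b + 1) := by
      rw [h]; exact Nat.mul_le_mul_left _ h2
    exact Nat.le_of_mul_le_mul_right h3 (Nat.succ_pos b)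

lemma S_ge (n s : ℕ) (h : 2 * s ≤ n) : s * n.choose (n / 2 + s) ≤ S n s := by
  have hsub : Finset.Ico (n / 2) (n / 2 + s) ∈
      (Finset.range (n + 1)).powersetCard (min s (n + 1)) := by
    rw [Finset.mem_powersetCard]
    refine ⟨fun i hi => ?_, ?_⟩
    · rw [Finset.mem_Ico] at hi; rw [Finset.mem_range]; omega
    · rw [Nat.card_Ico]; omega
  refine le_trans ?_ (Finset.le_sup hsub)
  have : s * n.choose (n / 2 + s) = (Finset.Ico (n / 2) (n / 2 + s)).card • n.choose (n / 2 + s) := by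
    rw [Nat.card_Ico, smul_eq_mul, Nat.add_sub_cancel_left]
  rw [this]
  refine Finset.card_nsmul_le_sum _ _ _ fun i hi => ?_
  rw [Finset.mem_Ico] at hi
  exact choose_anti n hi.1 (le_of_lt hi.2)

lemma choose_ratio (n s : ℕ) (hs : s ≤ n / 2) : ∀ j ≤ s,
    n.choose (n / 2) * (n / 2 - s) ^ j ≤ n.choose (n / 2 + j) * (n / 2 + s) ^ j := by
  intro j hj
  induction j with
  | zero => simp
  | succ j ih =>
    have hj' : j ≤ s := by omega
    have h1 := ih hj'
    have key : n.choose (n / 2 + j) * (n / 2 - s) ≤ n.choose (n / 2 + j + 1) * (n / 2 + s) := by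
      have hid := Nat.choose_succ_right_eq n (n / 2 + j)
      have h2 : n / 2 - s ≤ n - (n / 2 + j) := by omega
      have h3 : n / 2 + j + 1 ≤ n / 2 + s := by omega
      calc n.choose (n / 2 + j) * (n / 2 - s) ≤ n.choose (n / 2 + j) * (n - (n / 2 + j)) :=
            Nat.mul_le_mul_left _ h2
        _ = n.choose (n / 2 + j + 1) * (n / 2 + j + 1) := hid.symm
        _ ≤ n.choose (n / 2 + j + 1) * (n / 2 + s) := Nat.mul_le_mul_left _ h3
    calc n.choose (n / 2) * (n / 2 - s) ^ (j + 1)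
        = (n.choose (n / 2) * (n / 2 - s) ^ j) * (n / 2 - s) := by ring
      _ ≤ (n.choose (n / 2 + j) * (n / 2 + s) ^ j) * (n / 2 - s) := Nat.mul_le_mul_right _ h1
      _ = (n.choose (n / 2 + j) * (n / 2 - s)) * (n / 2 + s) ^ j := by ring
      _ ≤ (n.choose (n / 2 + j + 1) * (n / 2 + s)) * (n / 2 + s) ^ j := Nat.mul_le_mul_right _ key
      _ = n.choose (n / 2 + j + 1) * (n / 2 + s) ^ (j + 1) := by ring

lemma central_step (t : ℕ) :
    2 * (t + 1) * Nat.choose t (t / 2) ≤ (t + 2) * Nat.choose (t + 1) ((t + 1) / 2) := by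
  rcases Nat.even_or_odd t with ⟨r, hr⟩ | ⟨r, hr⟩
  · subst hr
    have hd1 : (r + r) / 2 = r := by omega
    have hd2 : (r + r + 1) / 2 = r := by omega
    rw [hd1, hd2]
    have h1 := Nat.add_one_mul_choose_eq (r + r) r
    have h2 : (r + r + 1).choose (r + 1) = (r + r + 1).choose r := by
      have : r + r + 1 - r = r + 1 := by omega
      rw [← this, Nat.choose_symm (by omega)]
    rw [h2] at h1
    nlinarith [h1]
  · subst hr
    have hd1 : (2 * r + 1) / 2 = r := by omega
    have hd2 : (2 * r + 1 + 1) / 2 = r + 1 := by omega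
    rw [hd1, hd2]
    have h2 : (2 * r + 2).choose (r + 1) = 2 * (2 * r + 1).choose r := by
      have hp : (2 * r + 2).choose (r + 1) = (2 * r + 1).choose r + (2 * r + 1).choose (r + 1) :=
        Nat.choose_succ_succ (2 * r + 1) r
      have hsym : (2 * r + 1).choose (r + 1) = (2 * r + 1).choose r := by
        have : 2 * r + 1 - r = r + 1 := by omega
        rw [← this, Nat.choose_symm (by omega)]
      omega
    rw [show 2 * r + 1 + 1 = 2 * r + 2 by ring, h2]
    nlinarith [Nat.zero_le ((2 * r + 1).choose r)]

noncomputable def F (t : ℕ) : ℝ := (Nat.choose t (t / 2) : ℝ) / 2 ^ t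

lemma F_pos (t : ℕ) : 0 < F t := by
  have : 0 < Nat.choose t (t / 2) := Nat.choose_pos (Nat.div_le_self _ _)
  unfold F
  positivity

lemma F_step (t : ℕ) : F t ≤ F (t + 1) * ((t + 2) / (t + 1) : ℝ) := by
  have key : (2 * (t + 1) * Nat.choose t (t / 2) : ℝ) ≤
      (t + 2) * Nat.choose (t + 1) ((t + 1) / 2) := by exact_mod_cast central_step t
  unfold F
  rw [div_mul_div_comm, div_le_div_iff₀ (by positivity) (by positivity)]
  have hp : (0:ℝ) ≤ 2 ^ t := by positivity
  have h3 := mul_le_mul_of_nonneg_right key hp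
  rw [pow_succ]
  ring_nf
  ring_nf at h3
  convert h3 using 1 <;> ring

lemma F_prod (m : ℕ) : ∀ j : ℕ, F m ≤ F (m + j) * (((m : ℝ) + 2) / ((m : ℝ) + 1)) ^ j := by
  intro j
  induction j with
  | zero => simp
  | succ j ih =>
    have hB : ((m : ℝ) + j + 2) / ((m : ℝ) + j + 1) ≤ ((m : ℝ) + 2) / ((m : ℝ) + 1) := by
      rw [div_le_div_iff₀ (by positivity) (by positivity)]
      nlinarith [Nat.cast_nonneg (α := ℝ) j, Nat.cast_nonneg (α := ℝ) m]
    have hstep := F_step (m + j)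
    have hcast : ((m + j : ℕ) : ℝ) = (m : ℝ) + j := by push_cast; ring
    calc F m ≤ F (m + j) * (((m : ℝ) + 2) / ((m : ℝ) + 1)) ^ j := ih
      _ ≤ (F (m + j + 1) * (((m : ℝ) + j + 2) / ((m : ℝ) + j + 1))) *
            (((m : ℝ) + 2) / ((m : ℝ) + 1)) ^ j := by
          refine mul_le_mul_of_nonneg_right ?_ (by positivity)
          calc F (m + j) ≤ F (m + j + 1) * (((m + j : ℕ) : ℝ) + 2) / (((m + j : ℕ) : ℝ) + 1) := by
                rw [mul_div_assoc]; exact hstep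
            _ = F (m + j + 1) * (((m : ℝ) + j + 2) / ((m : ℝ) + j + 1)) := by
                rw [mul_div_assoc, hcast]
      _ ≤ F (m + j + 1) * (((m : ℝ) + 2) / ((m : ℝ) + 1)) ^ (j + 1) := by
          rw [pow_succ]
          have := mul_le_mul_of_nonneg_left hB (le_of_lt (F_pos (m + j + 1)))
          nlinarith [pow_nonneg (show (0:ℝ) ≤ ((m : ℝ) + 2) / ((m : ℝ) + 1) by positivity) j,
            F_pos (m + j + 1)]
      _ = F (m + (j + 1)) * (((m : ℝ) + 2) / ((m : ℝ) + 1)) ^ (j + 1) := by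
          rw [show m + (j + 1) = m + j + 1 from rfl]

lemma pow_one_add_le (K : ℕ) (x u : ℝ) (hx0 : 0 < x) (hx1 : x < 1)
    (hK : (K : ℝ) * x ≤ u) (hu1 : u < 1) : (1 + x) ^ K ≤ 1 / (1 - u) := by
  have hb : 1 - (K : ℝ) * x ≤ (1 - x) ^ K := by
    have h := one_add_mul_le_pow (a := -x) (by linarith) K
    have h1 : 1 + (K : ℝ) * (-x) = 1 - (K : ℝ) * x := by ring
    have h2 : 1 + -x = 1 - x := by ring
    rw [h1, h2] at h
    exact h
  have hprod : (1 + x) ^ K * (1 - x) ^ K ≤ 1 := by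
    rw [← mul_pow]
    have h1 : (1 + x) * (1 - x) = 1 - x ^ 2 := by ring
    rw [h1]
    refine pow_le_one₀ ?_ ?_ <;> nlinarith [sq_nonneg x]
  have h1x : 0 < (1 - x) ^ K := pow_pos (by linarith) _
  have hKx0 : 0 < 1 - (K : ℝ) * x := by linarith
  have hu0 : 0 < 1 - u := by linarith
  have e1 : (1 + x) ^ K ≤ 1 / (1 - x) ^ K := by
    rw [le_div_iff₀ h1x]; exact hprod
  have e2 : (1 : ℝ) / (1 - x) ^ K ≤ 1 / (1 - (K : ℝ) * x) :=
    one_div_le_one_div_of_le hKx0 hb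
  have e3 : (1 : ℝ) / (1 - (K : ℝ) * x) ≤ 1 / (1 - u) :=
    one_div_le_one_div_of_le hu0 (by linarith)
  linarith

set_option maxHeartbeats 3000000 in
theorem S_average_lt (s : ℕ) (hs : 1 ≤ s) (k : ℕ → ℕ)
    (hk : ∀ n : ℕ, (k n : ℝ) ≤ (n : ℝ) ^ ((2 : ℝ) / 3)) :
    ∃ N : ℕ, ∀ n ≥ N,
      (1 / 2) * (2 : ℝ) ^ (-((n - k n : ℕ) : ℝ)) * (S (n - k n) (s - 1) : ℝ) +
        (1 / 2) * (2 : ℝ) ^ (-((n - k n : ℕ) : ℝ)) * (S (n - k n) s : ℝ)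
      < (2 : ℝ) ^ (-(n : ℝ)) * (S n s : ℝ) := by
  refine ⟨4096 * (s + 1) ^ 3, fun n hn => ?_⟩
  have hs1 : (1 : ℝ) ≤ (s : ℝ) := by exact_mod_cast hs
  have hn' : 4096 * (s + 1) ^ 3 ≤ n := hn
  obtain ⟨t, ht⟩ : ∃ t, s ^ 3 = t := ⟨_, rfl⟩
  obtain ⟨u, hu'⟩ : ∃ u, (s + 1) ^ 3 = u := ⟨_, rfl⟩
  have hst : s ≤ t := ht ▸ Nat.le_self_pow (by norm_num) s
  have htu : t ≤ u := by rw [← ht, ← hu']; exact Nat.pow_le_pow_left (by omega) 3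
  have hu1 : 1 ≤ u := by rw [← hu']; exact Nat.one_le_pow _ _ (by omega)
  rw [hu'] at hn'
  have h2s : 2 * s ≤ n := by omega
  have hn32 : 32 * s ^ 3 + 2 ≤ n := by rw [ht]; omega
  have hc16 : 16 * s ^ 3 ≤ n / 2 := by rw [ht]; omega
  have hcs : s ≤ n / 2 := by omega
  have hn0 : 0 < n := by omega
  have hn2R : (2 : ℝ) ≤ (n : ℝ) := by exact_mod_cast (by omega : 2 ≤ n)
  have hnR : (0 : ℝ) < n := by exact_mod_cast hn0
  have hcube : (16 * (s : ℝ)) ^ (3 : ℕ) ≤ (n : ℝ) := by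
    have h1 : 4096 * s ^ 3 ≤ n := by omega
    have h2 : ((4096 * s ^ 3 : ℕ) : ℝ) ≤ (n : ℝ) := by exact_mod_cast h1
    push_cast at h2
    nlinarith [h2]
  have hroot : 16 * (s : ℝ) ≤ (n : ℝ) ^ ((1 : ℝ) / 3) := by
    have h0 : (0 : ℝ) ≤ 16 * (s : ℝ) := by positivity
    calc 16 * (s : ℝ) = ((16 * (s : ℝ)) ^ (3 : ℕ)) ^ ((1 : ℝ) / 3) := by
          rw [← Real.rpow_natCast (16 * (s : ℝ)) 3, ← Real.rpow_mul h0]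
          norm_num
      _ ≤ ((n : ℝ)) ^ ((1 : ℝ) / 3) :=
          Real.rpow_le_rpow (by positivity) hcube (by norm_num)
  have hK16 : (k n : ℝ) * (16 * (s : ℝ)) ≤ (n : ℝ) := by
    calc (k n : ℝ) * (16 * (s : ℝ))
        ≤ (n : ℝ) ^ ((2 : ℝ) / 3) * (n : ℝ) ^ ((1 : ℝ) / 3) :=
          mul_le_mul (hk n) hroot (by positivity) (Real.rpow_nonneg hnR.le _)
      _ = (n : ℝ) ^ ((2 : ℝ) / 3 + 1 / 3) := (Real.rpow_add hnR _ _).symm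
      _ = (n : ℝ) ^ (1 : ℝ) := by norm_num
      _ = (n : ℝ) := Real.rpow_one _
  have hKnR : (k n : ℝ) ≤ (n : ℝ) := by nlinarith [Nat.cast_nonneg (α := ℝ) (k n)]
  have hKn : k n ≤ n := by exact_mod_cast hKnR
  obtain ⟨m, hmdef⟩ : ∃ m, m = n - k n := ⟨_, rfl⟩
  rw [← hmdef]
  have hmK : m + k n = n := by omega
  clear hk
  have hmR : (m : ℝ) = (n : ℝ) - (k n : ℝ) := by
    rw [hmdef, Nat.cast_sub hKn]
  have hm_half : (n : ℝ) / 2 ≤ (m : ℝ) := by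
    nlinarith [hK16, Nat.cast_nonneg (α := ℝ) (k n)]
  have hm0 : (0 : ℝ) < (m : ℝ) + 1 := by positivity
  have hm1 : (1 : ℝ) ≤ (m : ℝ) := by linarith
  -- F chain
  have hFm : F m ≤ F n * (((m : ℝ) + 2) / ((m : ℝ) + 1)) ^ (k n) := by
    have h := F_prod m (k n)
    rwa [hmK] at h
  have hu : (0 : ℝ) < 1 - 1 / (8 * (s : ℝ)) := by
    rw [sub_pos, div_lt_one (by positivity)]
    nlinarith
  have hKx : (k n : ℝ) * (1 / ((m : ℝ) + 1)) ≤ 1 / (8 * (s : ℝ)) := by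
    rw [mul_one_div, div_le_div_iff₀ hm0 (by positivity)]
    nlinarith [hK16, hm_half]
  have hpow_le : (((m : ℝ) + 2) / ((m : ℝ) + 1)) ^ (k n) ≤ 1 / (1 - 1 / (8 * (s : ℝ))) := by
    have hx_def : ((m : ℝ) + 2) / ((m : ℝ) + 1) = 1 + 1 / ((m : ℝ) + 1) := by
      field_simp; ring
    rw [hx_def]
    refine pow_one_add_le _ _ _ (by positivity) ?_ hKx (by linarith)
    rw [div_lt_one hm0]; linarith
  have hchain1 : F m ≤ F n * (1 / (1 - 1 / (8 * (s : ℝ)))) :=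
    le_trans hFm (mul_le_mul_of_nonneg_left hpow_le (F_pos n).le)
  -- RHS lower bound pieces
  have hcsp : (0 : ℝ) < ((n / 2 : ℕ) : ℝ) + (s : ℝ) := by
    have := Nat.cast_nonneg (α := ℝ) (n / 2); linarith
  have hcsR : (s : ℝ) ≤ ((n / 2 : ℕ) : ℝ) := by exact_mod_cast hcs
  have hq0 : (0 : ℝ) ≤ (((n / 2 : ℕ) : ℝ) - (s : ℝ)) / (((n / 2 : ℕ) : ℝ) + (s : ℝ)) :=
    div_nonneg (by linarith) hcsp.le
  have hL3 := choose_ratio n s hcs s le_rfl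
  have hL3R : (n.choose (n / 2) : ℝ) * (((n / 2 : ℕ) : ℝ) - (s : ℝ)) ^ s ≤
      (n.choose (n / 2 + s) : ℝ) * (((n / 2 : ℕ) : ℝ) + (s : ℝ)) ^ s := by
    have h := (Nat.cast_le (α := ℝ)).2 hL3
    push_cast [Nat.cast_sub hcs] at h
    convert h using 2 <;> push_cast <;> ring
  have hqch : ((((n / 2 : ℕ) : ℝ) - (s : ℝ)) / (((n / 2 : ℕ) : ℝ) + (s : ℝ))) ^ s *
      (n.choose (n / 2) : ℝ) ≤ (n.choose (n / 2 + s) : ℝ) := by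
    rw [div_pow, div_mul_eq_mul_div, div_le_iff₀ (pow_pos hcsp s)]
    linarith [hL3R]
  have hc16R : 16 * (s : ℝ) ^ 3 ≤ ((n / 2 : ℕ) : ℝ) := by exact_mod_cast hc16
  have hq_lb : 1 - 1 / (8 * (s : ℝ)) ≤
      ((((n / 2 : ℕ) : ℝ) - (s : ℝ)) / (((n / 2 : ℕ) : ℝ) + (s : ℝ))) ^ s := by
    have ha : (-2 : ℝ) ≤ -(2 * (s : ℝ) / (((n / 2 : ℕ) : ℝ) + (s : ℝ))) := by
      have h1 : 2 * (s : ℝ) / (((n / 2 : ℕ) : ℝ) + (s : ℝ)) ≤ 2 := by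
        rw [div_le_iff₀ hcsp]
        linarith [Nat.cast_nonneg (α := ℝ) (n / 2)]
      linarith
    have hber := one_add_mul_le_pow ha s
    have heq : (1 : ℝ) + -(2 * (s : ℝ) / (((n / 2 : ℕ) : ℝ) + (s : ℝ))) =
        (((n / 2 : ℕ) : ℝ) - (s : ℝ)) / (((n / 2 : ℕ) : ℝ) + (s : ℝ)) := by
      field_simp
      ring
    rw [heq] at hber
    have h16 : (s : ℝ) * (2 * (s : ℝ) / (((n / 2 : ℕ) : ℝ) + (s : ℝ))) ≤ 1 / (8 * (s : ℝ)) := by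
      rw [mul_div_assoc', div_le_div_iff₀ hcsp (by positivity)]
      nlinarith [hc16R]
    calc 1 - 1 / (8 * (s : ℝ))
        ≤ 1 + (s : ℝ) * -(2 * (s : ℝ) / (((n / 2 : ℕ) : ℝ) + (s : ℝ))) := by
          have : (s : ℝ) * -(2 * (s : ℝ) / (((n / 2 : ℕ) : ℝ) + (s : ℝ))) =
              -((s : ℝ) * (2 * (s : ℝ) / (((n / 2 : ℕ) : ℝ) + (s : ℝ)))) := by ring
          rw [this]
          linarith [h16]
      _ ≤ _ := hber
  -- numeric strict inequality
  have hnum : ((2 * (s : ℝ) - 1) / 2) * (1 / (1 - 1 / (8 * (s : ℝ)))) <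
      (s : ℝ) * (1 - 1 / (8 * (s : ℝ))) := by
    have hsu : (s : ℝ) * (1 / (8 * (s : ℝ))) = 1 / 8 := by
      field_simp
    have hup : (0 : ℝ) < 1 / (8 * (s : ℝ)) := by positivity
    rw [mul_one_div, div_lt_iff₀ hu]
    have h2 : (s : ℝ) * (1 / (8 * (s : ℝ))) * (1 / (8 * (s : ℝ))) =
        (1 / 8) * (1 / (8 * (s : ℝ))) := by rw [hsu]
    nlinarith [h2, hsu, hup]
  -- S bounds
  have hSm1 : (S m (s - 1) : ℝ) ≤ ((s : ℝ) - 1) * (m.choose (m / 2) : ℝ) := by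
    have h := (Nat.cast_le (α := ℝ)).2 (S_le m (s - 1))
    push_cast [Nat.cast_sub hs] at h
    linarith
  have hSm2 : (S m s : ℝ) ≤ (s : ℝ) * (m.choose (m / 2) : ℝ) := by
    have h := (Nat.cast_le (α := ℝ)).2 (S_le m s)
    push_cast at h
    linarith
  have hSn : (s : ℝ) * (n.choose (n / 2 + s) : ℝ) ≤ (S n s : ℝ) := by
    have h := (Nat.cast_le (α := ℝ)).2 (S_ge n s h2s)
    push_cast at h
    linarith
  -- rewrite the powers
  have hpm : (2 : ℝ) ^ (-((m : ℕ) : ℝ)) = ((2 : ℝ) ^ m)⁻¹ := by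
    rw [Real.rpow_neg (by norm_num), Real.rpow_natCast]
  have hpn : (2 : ℝ) ^ (-((n : ℕ) : ℝ)) = ((2 : ℝ) ^ n)⁻¹ := by
    rw [Real.rpow_neg (by norm_num), Real.rpow_natCast]
  rw [hpm, hpn]
  have hppm : (0 : ℝ) < (2 : ℝ) ^ m := by positivity
  have hppn : (0 : ℝ) < (2 : ℝ) ^ n := by positivity
  set q : ℝ := ((((n / 2 : ℕ) : ℝ) - (s : ℝ)) / (((n / 2 : ℕ) : ℝ) + (s : ℝ))) ^ s with hqdef
  have hqnn : 0 ≤ q := pow_nonneg hq0 _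
  calc (1 / 2) * ((2 : ℝ) ^ m)⁻¹ * (S m (s - 1) : ℝ) +
        (1 / 2) * ((2 : ℝ) ^ m)⁻¹ * (S m s : ℝ)
      ≤ (1 / 2) * ((2 : ℝ) ^ m)⁻¹ * (((s : ℝ) - 1) * (m.choose (m / 2) : ℝ)) +
        (1 / 2) * ((2 : ℝ) ^ m)⁻¹ * ((s : ℝ) * (m.choose (m / 2) : ℝ)) := by
        have h1 : (0 : ℝ) ≤ (1 / 2) * ((2 : ℝ) ^ m)⁻¹ := by positivity
        exact add_le_add (mul_le_mul_of_nonneg_left hSm1 h1)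
          (mul_le_mul_of_nonneg_left hSm2 h1)
    _ = ((2 * (s : ℝ) - 1) / 2) * F m := by
        unfold F; field_simp; ring
    _ ≤ ((2 * (s : ℝ) - 1) / 2) * (F n * (1 / (1 - 1 / (8 * (s : ℝ))))) := by
        apply mul_le_mul_of_nonneg_left hchain1
        nlinarith
    _ = (((2 * (s : ℝ) - 1) / 2) * (1 / (1 - 1 / (8 * (s : ℝ))))) * F n := by ring
    _ < ((s : ℝ) * (1 - 1 / (8 * (s : ℝ)))) * F n :=
        mul_lt_mul_of_pos_right hnum (F_pos n)
    _ ≤ ((s : ℝ) * q) * F n := by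
        apply mul_le_mul_of_nonneg_right _ (F_pos n).le
        exact mul_le_mul_of_nonneg_left hq_lb (by linarith)
    _ = (s : ℝ) * (q * (n.choose (n / 2) : ℝ)) * ((2 : ℝ) ^ n)⁻¹ := by
        unfold F; field_simp
    _ ≤ (s : ℝ) * (n.choose (n / 2 + s) : ℝ) * ((2 : ℝ) ^ n)⁻¹ := by
        apply mul_le_mul_of_nonneg_right _ (by positivity)
        exact mul_le_mul_of_nonneg_left hqch (by linarith)
    _ ≤ ((2 : ℝ) ^ n)⁻¹ * (S n s : ℝ) := by
        rw [mul_comm]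
        exact mul_le_mul_of_nonneg_left hSn (by positivity)
end
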